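/- There exists a constant C depending only on α and β (one may take C = (β − α)^{−1/2}) such that for every s ∈ (0, 1) and every u : ℝ² → ℝ² that is continuous on the closure of Ω_s and differentiable on Ω_s with ‖∇u‖_{L²(Ω_s)} < ∞: | (1/(β−α)) ∫_α^β ( u(e_r(θ)) − u(s·e_r(θ)) ) dθ | ≤ C √(log(1/s)) ‖∇u‖_{L²(Ω_s)}. -/

import Mathlib

open MeasureTheory Set
open scoped ENNReal RealInnerProductSpace

noncomputable section

abbrev E2 := EuclideanSpace ℝ (Fin 2)
abbrev M2 := Matrix (Fin 2) (Fin 2) ℝ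

def er (θ : ℝ) : E2 :=
  Real.cos θ • EuclideanSpace.single (0 : Fin 2) (1 : ℝ) +
    Real.sin θ • EuclideanSpace.single (1 : Fin 2) (1 : ℝ)

def etheta (θ : ℝ) : E2 :=
  (-Real.sin θ) • EuclideanSpace.single (0 : Fin 2) (1 : ℝ) +
    Real.cos θ • EuclideanSpace.single (1 : Fin 2) (1 : ℝ)

def wedge (α β δ : ℝ) : Set E2 :=
  {x | ∃ r θ : ℝ, r ∈ Set.Ioo δ 1 ∧ θ ∈ Set.Ioo α β ∧ x = r • er θ}

def wedgeAnn (α β s t : ℝ) : Set E2 :=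
  {x | ∃ r θ : ℝ, r ∈ Set.Ioo s t ∧ θ ∈ Set.Ioo α β ∧ x = r • er θ}

def frob (A : M2) : ℝ := Real.sqrt (∑ i, ∑ j, A i j ^ 2)

def SO2 : Set M2 := {R | R.transpose * R = 1 ∧ R.det = 1}

def distSO2 (F : M2) : ℝ := sInf ((fun R => frob (F - R)) '' SO2)

def mclm (A : M2) : E2 →L[ℝ] E2 :=
  LinearMap.toContinuousLinearMap (Matrix.toEuclideanLin A)

def lpM (p : ℝ) (U : Set E2) (G : E2 → M2) : ℝ≥0∞ :=
  (∫⁻ x in U, ENNReal.ofReal (frob (G x) ^ p)) ^ (1 / p)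

def lpS (p : ℝ) (U : Set E2) (g : E2 → ℝ) : ℝ≥0∞ :=
  (∫⁻ x in U, ENNReal.ofReal (|g x| ^ p)) ^ (1 / p)

def gag (p α β : ℝ) (v : ℝ → E2) : ℝ≥0∞ :=
  (∫⁻ θ in Set.Ioo α β, ∫⁻ θ' in Set.Ioo α β,
      ENNReal.ofReal ((‖v θ - v θ'‖ / |θ - θ'|) ^ p)) ^ (1 / p)

def sym2 (A : M2) : M2 := (1 / 2 : ℝ) • (A + A.transpose)

def skw2 (A : M2) : M2 := (1 / 2 : ℝ) • (A - A.transpose)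

def Rset (U : Set E2) (G : E2 → M2) : Set M2 :=
  {R | R ∈ SO2 ∧ ∀ Q ∈ SO2,
      (∫⁻ x in U, ENNReal.ofReal (frob (G x - R) ^ 2)) ≤
        ∫⁻ x in U, ENNReal.ofReal (frob (G x - Q) ^ 2)}

def perp (v : Fin 2 → ℝ) : Fin 2 → ℝ := ![-(v 1), v 0]

lemma er_apply (θ : ℝ) (i : Fin 2) : er θ i = if i = 0 then Real.cos θ else Real.sin θ := by
  fin_cases i <;> simp [er, EuclideanSpace.single_apply]

lemma norm_er (θ : ℝ) : ‖er θ‖ = 1 := by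
  rw [EuclideanSpace.norm_eq]
  have : ∑ i : Fin 2, ‖er θ i‖ ^ 2 = 1 := by
    simp [Fin.sum_univ_two, er_apply, sq_abs]
  rw [this, Real.sqrt_one]

lemma continuous_er : Continuous er := by
  unfold er; fun_prop

lemma mclm_apply (A : M2) (v : E2) (i : Fin 2) : mclm A v i = ∑ j, A i j * v j := by
  rfl

lemma frob_nonneg (A : M2) : 0 ≤ frob A := Real.sqrt_nonneg _

lemma norm_mclm_apply_le (A : M2) (v : E2) : ‖mclm A v‖ ≤ frob A * ‖v‖ := by
  have hv : ‖v‖ = Real.sqrt (∑ j : Fin 2, (v j) ^ 2) := by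
    rw [EuclideanSpace.norm_eq]; congr 1; exact Finset.sum_congr rfl fun j _ => by
      rw [Real.norm_eq_abs, sq_abs]
  have hA : ∀ i : Fin 2, (∑ j, A i j * v j) ^ 2 ≤ (∑ j, A i j ^ 2) * (∑ j, v j ^ 2) :=
    fun i => Finset.sum_mul_sq_le_sq_mul_sq _ _ _
  have h1 : ‖mclm A v‖ = Real.sqrt (∑ i : Fin 2, (∑ j, A i j * v j) ^ 2) := by
    rw [EuclideanSpace.norm_eq]; congr 1; exact Finset.sum_congr rfl fun i _ => by
      rw [Real.norm_eq_abs, sq_abs, mclm_apply]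
  rw [h1, hv, frob, ← Real.sqrt_mul (by positivity)]
  apply Real.sqrt_le_sqrt
  rw [Finset.sum_mul]
  exact Finset.sum_le_sum fun i _ => hA i

def ψe : E2 ≃ᵐ ℝ × ℝ := (MeasurableEquiv.toLp 2 (Fin 2 → ℝ)).symm.trans MeasurableEquiv.finTwoArrow

lemma ψe_mp : MeasurePreserving ψe :=
  (MeasureTheory.volume_preserving_finTwoArrow ℝ).comp
    (EuclideanSpace.volume_preserving_symm_measurableEquiv_toLp (Fin 2))

lemma ψe_apply (x : E2) : ψe x = (x 0, x 1) := rfl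

lemma polarCoord_symm_apply' (p : ℝ × ℝ) :
    polarCoord.symm p = (p.1 * Real.cos p.2, p.1 * Real.sin p.2) := rfl

lemma smul_er_apply (r θ : ℝ) :
    ψe (r • er θ) = polarCoord.symm (r, θ) := by
  rw [ψe_apply, polarCoord_symm_apply']
  simp [er_apply, PiLp.smul_apply, smul_eq_mul]

lemma wedge_eq_image (α β s : ℝ) :
    wedge α β s = (fun p : ℝ × ℝ => p.1 • er p.2) '' (Ioo s 1 ×ˢ Ioo α β) := by
  ext x
  constructor
  · rintro ⟨r, θ, hr, hθ, rfl⟩; exact ⟨(r, θ), ⟨hr, hθ⟩, rfl⟩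
  · rintro ⟨⟨r, θ⟩, ⟨hr, hθ⟩, rfl⟩; exact ⟨r, θ, hr, hθ, rfl⟩

lemma injOn_polar (α β s : ℝ) (hs : 0 ≤ s) (h2π : β - α < 2 * Real.pi) :
    InjOn (polarCoord.symm : ℝ × ℝ → ℝ × ℝ) (Ioo s 1 ×ˢ Ioo α β) := by
  rintro ⟨r, θ⟩ ⟨hr, hθ⟩ ⟨r', θ'⟩ ⟨hr', hθ'⟩ h
  simp only [polarCoord_symm_apply', Prod.mk.injEq] at h
  have hrpos : 0 < r := lt_of_le_of_lt hs hr.1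
  have hrpos' : 0 < r' := lt_of_le_of_lt hs hr'.1
  have hrr : r = r' := by
    have : r ^ 2 = r' ^ 2 := by
      have h1 := congrArg (· ^ 2) h.1
      have h2 := congrArg (· ^ 2) h.2
      simp only [mul_pow] at h1 h2
      nlinarith [Real.sin_sq_add_cos_sq θ, Real.sin_sq_add_cos_sq θ']
    have h0 : (r - r') * (r + r') = 0 := by nlinarith
    rcases mul_eq_zero.mp h0 with h0 | h0
    · linarith
    · linarith
  subst hrr
  have hcos : Real.cos θ = Real.cos θ' := by
    exact mul_left_cancel₀ hrpos.ne' h.1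
  have hsin : Real.sin θ = Real.sin θ' := by
    exact mul_left_cancel₀ hrpos.ne' h.2
  have hone : Real.cos (θ - θ') = 1 := by
    rw [Real.cos_sub, hcos, hsin, ← Real.cos_sq_add_sin_sq θ']; ring
  have hθθ : θ - θ' = 0 := by
    rw [Real.cos_eq_one_iff_of_lt_of_lt (by linarith [hθ.1, hθ'.2]) (by linarith [hθ.2, hθ'.1])]
      at hone
    exact hone
  have : θ = θ' := by linarith
  simp [this]

lemma wedge_lintegral {α β s : ℝ} (hs : 0 < s) (h2π : β - α < 2 * Real.pi)
    (f : E2 → ℝ≥0∞) :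
    ∫⁻ x in wedge α β s, f x =
      ∫⁻ p in Ioo s 1 ×ˢ Ioo α β, ENNReal.ofReal p.1 * f (p.1 • er p.2) := by
  set U : Set (ℝ × ℝ) := Ioo s 1 ×ˢ Ioo α β with hU
  have hUm : MeasurableSet U := measurableSet_Ioo.prod measurableSet_Ioo
  set B : ℝ × ℝ → ℝ × ℝ →L[ℝ] ℝ × ℝ := fun p =>
    LinearMap.toContinuousLinearMap (Matrix.toLin (Module.Basis.finTwoProd ℝ) (Module.Basis.finTwoProd ℝ)
      !![Real.cos p.2, -p.1 * Real.sin p.2; Real.sin p.2, p.1 * Real.cos p.2]) with hB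
  have hBd : ∀ p ∈ U, HasFDerivWithinAt (polarCoord.symm : ℝ × ℝ → ℝ × ℝ) (B p) U p := fun p _ =>
    (hasFDerivAt_polarCoord_symm p).hasFDerivWithinAt
  have B_det : ∀ p, (B p).det = p.1 := by
    intro p
    conv_rhs => rw [← one_mul p.1, ← Real.cos_sq_add_sin_sq p.2]
    simp only [hB, neg_mul, LinearMap.det_toContinuousLinearMap, LinearMap.det_toLin,
      Matrix.det_fin_two_of, sub_neg_eq_add]
    ring
  have hinj := injOn_polar α β s hs.le h2π
  have hback : ∀ p : ℝ × ℝ, ψe.symm (polarCoord.symm p) = p.1 • er p.2 := by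
    intro p
    rw [← smul_er_apply p.1 p.2, MeasurableEquiv.symm_apply_apply]
  have himg : wedge α β s
      = (ψe.symm : ℝ × ℝ → E2) '' ((polarCoord.symm : ℝ × ℝ → ℝ × ℝ) '' U) := by
    rw [wedge_eq_image, ← Set.image_comp]
    exact Set.image_congr fun p _ => (hback p).symm
  calc ∫⁻ x in wedge α β s, f x
      = ∫⁻ y in (polarCoord.symm : ℝ × ℝ → ℝ × ℝ) '' U, f (ψe.symm y) := by
        rw [himg]
        exact ((ψe_mp.symm ψe).setLIntegral_comp_emb
          (MeasurableEquiv.measurableEmbedding _) f _).symm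
    _ = ∫⁻ p in U, ENNReal.ofReal |(B p).det| * f (ψe.symm (polarCoord.symm p)) :=
        lintegral_image_eq_lintegral_abs_det_fderiv_mul volume hUm hBd hinj _
    _ = _ := by
        apply setLIntegral_congr_fun hUm
        intro p hp
        dsimp only
        rw [B_det, hback, abs_of_pos (lt_trans hs hp.1.1)]

lemma lint_inv {s : ℝ} (hs0 : 0 < s) (hs1 : s < 1) :
    ∫⁻ r in Ioo s 1, ENNReal.ofReal r⁻¹ = ENNReal.ofReal (Real.log (1 / s)) := by
  have hcont : ContinuousOn (fun r : ℝ => r⁻¹) (Icc s 1) :=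
    ContinuousOn.inv₀ continuousOn_id fun r hr => (lt_of_lt_of_le hs0 hr.1).ne'
  have hint : IntegrableOn (fun r : ℝ => r⁻¹) (Ioo s 1) := by
    exact (hcont.integrableOn_Icc).mono_set Ioo_subset_Icc_self
  rw [← ofReal_integral_eq_lintegral_ofReal hint]
  · congr 1
    rw [← integral_Ioc_eq_integral_Ioo, ← intervalIntegral.integral_of_le hs1.le,
      integral_inv_of_pos hs0 one_pos]
  · filter_upwards [ae_restrict_mem measurableSet_Ioo] with r hr
    exact inv_nonneg.mpr (le_of_lt (lt_trans hs0 hr.1))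

lemma ofReal_sq (a : ℝ) (ha : 0 ≤ a) :
    ENNReal.ofReal a ^ (2:ℝ) = ENNReal.ofReal (a ^ 2) := by
  rw [ENNReal.ofReal_rpow_of_nonneg ha (by norm_num)]
  norm_num [Real.rpow_natCast]

lemma weight_holder {s : ℝ} (hs0 : 0 < s) {D : ℝ → E2}
    (hD : Measurable D) :
    ∫⁻ r in Ioo s 1, ENNReal.ofReal ‖D r‖ ≤
      (∫⁻ r in Ioo s 1, ENNReal.ofReal r⁻¹) ^ ((1:ℝ)/2) *
      (∫⁻ r in Ioo s 1, ENNReal.ofReal (r * ‖D r‖ ^ 2)) ^ ((1:ℝ)/2) := by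
  set μ := volume.restrict (Ioo s 1) with hμ
  set f : ℝ → ℝ≥0∞ := fun r => ENNReal.ofReal (Real.sqrt r)⁻¹ with hf
  set g : ℝ → ℝ≥0∞ := fun r => ENNReal.ofReal (Real.sqrt r * ‖D r‖) with hg
  have hmemae : ∀ᵐ r ∂μ, r ∈ Ioo s 1 := ae_restrict_mem measurableSet_Ioo
  have hfg : ∫⁻ r in Ioo s 1, ENNReal.ofReal ‖D r‖ = ∫⁻ r, (f * g) r ∂μ := by
    apply lintegral_congr_ae
    filter_upwards [hmemae] with r hr
    have hrpos : 0 < r := lt_trans hs0 hr.1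
    have hsq : Real.sqrt r ≠ 0 := (Real.sqrt_pos.mpr hrpos).ne'
    simp only [hf, hg, Pi.mul_apply]
    rw [← ENNReal.ofReal_mul (by positivity)]
    congr 1
    field_simp
  have hf2 : ∫⁻ r, f r ^ (2:ℝ) ∂μ = ∫⁻ r in Ioo s 1, ENNReal.ofReal r⁻¹ := by
    apply lintegral_congr_ae
    filter_upwards [hmemae] with r hr
    have hrpos : 0 < r := lt_trans hs0 hr.1
    simp only [hf]
    rw [ofReal_sq _ (by positivity)]
    congr 1
    rw [inv_pow, Real.sq_sqrt hrpos.le]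
  have hg2 : ∫⁻ r, g r ^ (2:ℝ) ∂μ = ∫⁻ r in Ioo s 1, ENNReal.ofReal (r * ‖D r‖ ^ 2) := by
    apply lintegral_congr_ae
    filter_upwards [hmemae] with r hr
    have hrpos : 0 < r := lt_trans hs0 hr.1
    simp only [hg]
    rw [ofReal_sq _ (by positivity)]
    congr 1
    rw [mul_pow, Real.sq_sqrt hrpos.le]
  have hfm : AEMeasurable f μ := by
    apply Measurable.aemeasurable
    exact ENNReal.measurable_ofReal.comp ((Real.continuous_sqrt.measurable).inv)
  have hgm : AEMeasurable g μ := by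
    apply Measurable.aemeasurable
    exact ENNReal.measurable_ofReal.comp
      ((Real.continuous_sqrt.measurable).mul hD.norm)
  have hpq : Real.HolderConjugate 2 2 := Real.HolderConjugate.two_two
  calc ∫⁻ r in Ioo s 1, ENNReal.ofReal ‖D r‖ = ∫⁻ r, (f * g) r ∂μ := hfg
    _ ≤ (∫⁻ r, f r ^ (2:ℝ) ∂μ) ^ ((1:ℝ)/2) * (∫⁻ r, g r ^ (2:ℝ) ∂μ) ^ ((1:ℝ)/2) :=
        ENNReal.lintegral_mul_le_Lp_mul_Lq μ hpq hfm hgm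
    _ = _ := by rw [hf2, hg2]

lemma continuous_smul_er : Continuous (fun p : ℝ × ℝ => p.1 • er p.2) :=
  continuous_fst.smul (continuous_er.comp continuous_snd)

lemma mem_closure_wedge {α β s : ℝ} (hs1 : s < 1) (hαβ : α < β) {r θ : ℝ}
    (hr : r ∈ Icc s 1) (hθ : θ ∈ Icc α β) : r • er θ ∈ closure (wedge α β s) := by
  have h1 : (r, θ) ∈ closure (Ioo s 1 ×ˢ Ioo α β) := by
    rw [closure_prod_eq, closure_Ioo hs1.ne, closure_Ioo hαβ.ne]
    exact ⟨hr, hθ⟩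
  have h2 := image_closure_subset_closure_image (f := fun p : ℝ × ℝ => p.1 • er p.2)
    (s := Ioo s 1 ×ˢ Ioo α β) continuous_smul_er
  have h3 : r • er θ ∈ (fun p : ℝ × ℝ => p.1 • er p.2) '' closure (Ioo s 1 ×ˢ Ioo α β) :=
    ⟨(r, θ), h1, rfl⟩
  rw [wedge_eq_image]
  exact h2 h3

lemma key_theta {α β s : ℝ} (hαβ : α < β) (hs0 : 0 < s) (hs1 : s < 1)
    {u : E2 → E2} (hu : ContinuousOn u (closure (wedge α β s)))
    (hd : ∀ x ∈ wedge α β s, DifferentiableAt ℝ u x)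
    {θ : ℝ} (hθ : θ ∈ Ioo α β) :
    ENNReal.ofReal ‖u (er θ) - u (s • er θ)‖ ≤
      (ENNReal.ofReal (Real.log (1 / s))) ^ ((1:ℝ)/2) *
        (∫⁻ r in Ioo s 1, ENNReal.ofReal (r * ‖fderiv ℝ u (r • er θ) (er θ)‖ ^ 2)) ^ ((1:ℝ)/2) := by
  set D : ℝ → E2 := fun r => fderiv ℝ u (r • er θ) (er θ) with hD
  have hDmeas : Measurable D :=
    (measurable_fderiv_apply_const ℝ u (er θ)).comp
      (measurable_id.smul_const (er θ))
  have H1 : ∫⁻ r in Ioo s 1, ENNReal.ofReal ‖D r‖ ≤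
      (ENNReal.ofReal (Real.log (1 / s))) ^ ((1:ℝ)/2) *
        (∫⁻ r in Ioo s 1, ENNReal.ofReal (r * ‖D r‖ ^ 2)) ^ ((1:ℝ)/2) := by
    have := weight_holder hs0 hDmeas
    rwa [lint_inv hs0 hs1] at this
  by_cases hfin : (∫⁻ r in Ioo s 1, ENNReal.ofReal ‖D r‖) = ⊤
  · have : (ENNReal.ofReal (Real.log (1 / s))) ^ ((1:ℝ)/2) *
        (∫⁻ r in Ioo s 1, ENNReal.ofReal (r * ‖D r‖ ^ 2)) ^ ((1:ℝ)/2) = ⊤ :=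
      top_le_iff.mp (hfin ▸ H1)
    rw [this]; exact le_top
  -- integrability
  have hint : IntegrableOn D (Ioo s 1) := by
    refine ⟨hDmeas.aestronglyMeasurable, ?_⟩
    rw [hasFiniteIntegral_iff_norm, lt_top_iff_ne_top]
    exact hfin
  have hii : IntervalIntegrable D volume s 1 :=
    (intervalIntegrable_iff_integrableOn_Ioo_of_le hs1.le).mpr hint
  -- FTC
  set c : ℝ → E2 := fun r => u (r • er θ) with hc
  have hmaps : ∀ r ∈ Icc s 1, r • er θ ∈ closure (wedge α β s) := fun r hr =>
    mem_closure_wedge hs1 hαβ hr (Ioo_subset_Icc_self hθ)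
  have hcont : ContinuousOn c (Icc s 1) :=
    hu.comp ((continuous_id.smul continuous_const).continuousOn) hmaps
  have hderiv : ∀ r ∈ Ioo s 1, HasDerivWithinAt c (D r) (Ioi r) r := by
    intro r hr
    have hx : r • er θ ∈ wedge α β s := ⟨r, θ, hr, hθ, rfl⟩
    have h1 : HasDerivAt (fun r : ℝ => r • er θ) (er θ) r := by
      simpa using (hasDerivAt_id r).smul_const (er θ)
    have h2 : HasFDerivAt u (fderiv ℝ u (r • er θ)) (r • er θ) := (hd _ hx).hasFDerivAt
    exact (h2.comp_hasDerivAt r h1).hasDerivWithinAt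
  have hftc : ∫ r in s..1, D r = c 1 - c s :=
    intervalIntegral.integral_eq_sub_of_hasDeriv_right_of_le hs1.le hcont hderiv hii
  have hval : u (er θ) - u (s • er θ) = ∫ r in s..1, D r := by
    rw [hftc, hc]
    simp [one_smul]
  rw [hval]
  calc ENNReal.ofReal ‖∫ r in s..1, D r‖
      ≤ ENNReal.ofReal (∫ r in s..1, ‖D r‖) :=
        ENNReal.ofReal_le_ofReal (intervalIntegral.norm_integral_le_integral_norm hs1.le)
    _ = ∫⁻ r in Ioo s 1, ENNReal.ofReal ‖D r‖ := by
        rw [intervalIntegral.integral_of_le hs1.le, integral_Ioc_eq_integral_Ioo]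
        exact ofReal_integral_eq_lintegral_ofReal hint.norm
          (Filter.Eventually.of_forall fun r => norm_nonneg _)
    _ ≤ _ := H1

lemma sqrt_holder {a b : ℝ} {J : ℝ → ℝ≥0∞} (hJ : Measurable J) :
    ∫⁻ θ in Ioo a b, J θ ^ ((1:ℝ)/2) ≤
      (volume (Ioo a b)) ^ ((1:ℝ)/2) * (∫⁻ θ in Ioo a b, J θ) ^ ((1:ℝ)/2) := by
  have hpq : Real.HolderConjugate 2 2 := Real.HolderConjugate.two_two
  have h := ENNReal.lintegral_mul_le_Lp_mul_Lq (volume.restrict (Ioo a b)) hpq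
    (aemeasurable_const (b := (1:ℝ≥0∞))) ((hJ.pow_const ((1:ℝ)/2)).aemeasurable)
  have h3 : ∀ θ : ℝ, (J θ ^ ((1:ℝ)/2)) ^ (2:ℝ) = J θ := fun θ => by
    rw [← ENNReal.rpow_mul, one_div, inv_mul_cancel₀ (two_ne_zero (α := ℝ)), ENNReal.rpow_one]
  simp only [Pi.mul_apply, one_mul, ENNReal.one_rpow, lintegral_const,
    Measure.restrict_apply_univ, h3] at h
  exact h

lemma continuous_polar_symm : Continuous (fun p : ℝ × ℝ => ((polarCoord.symm p : ℝ × ℝ))) := by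
  have : (fun p : ℝ × ℝ => (polarCoord.symm p : ℝ × ℝ))
      = fun p : ℝ × ℝ => (p.1 * Real.cos p.2, p.1 * Real.sin p.2) := funext polarCoord_symm_apply'
  rw [this]; fun_prop

lemma measurable_wedge {α β s : ℝ} (hs0 : 0 < s) (h2π : β - α < 2 * Real.pi) :
    MeasurableSet (wedge α β s) := by
  have h1 : MeasurableSet ((polarCoord.symm : ℝ × ℝ → ℝ × ℝ) '' (Ioo s 1 ×ˢ Ioo α β)) :=
    MeasurableSet.image_of_continuousOn_injOn (measurableSet_Ioo.prod measurableSet_Ioo)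
      continuous_polar_symm.continuousOn (injOn_polar α β s hs0.le h2π)
  have himg : wedge α β s
      = (ψe.symm : ℝ × ℝ → E2) '' ((polarCoord.symm : ℝ × ℝ → ℝ × ℝ) '' (Ioo s 1 ×ˢ Ioo α β)) := by
    rw [wedge_eq_image, ← Set.image_comp]
    refine Set.image_congr fun p _ => ?_
    simp only [Function.comp_apply]
    rw [← smul_er_apply, MeasurableEquiv.symm_apply_apply]
  rw [himg]
  exact (MeasurableEquiv.measurableEmbedding _).measurableSet_image.mpr h1

lemma mclm_single (A : M2) (j i : Fin 2) :
    mclm A (EuclideanSpace.single j (1:ℝ)) i = A i j := by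
  rw [mclm_apply]
  simp [EuclideanSpace.single_apply]

lemma frob_rpow_two (A : M2) : frob A ^ (2:ℝ) = ∑ i, ∑ j, A i j ^ 2 := by
  have h2 : ((2:ℕ):ℝ) = (2:ℝ) := by norm_num
  rw [← h2, Real.rpow_natCast, frob, Real.sq_sqrt (by positivity)]

/-- There is a constant `C = C(α, β)` such that for every `s ∈ (0,1)` and
every `u` continuous on the closed wedge and differentiable inside with square-integrable
gradient, the average boundary difference satisfies
`|⨍ (u(e_r θ) − u(s e_r θ)) dθ| ≤ C √(log(1/s)) ‖∇u‖_{L²(Ω_s)}`. -/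
theorem average_boundary_difference_log (α β : ℝ) (hαβ : α < β)
    (h2π : β - α < 2 * Real.pi) :
    ∃ C : ℝ, 0 < C ∧
      ∀ s ∈ Set.Ioo (0 : ℝ) 1, ∀ (u : E2 → E2) (G : E2 → M2),
        ContinuousOn u (closure (wedge α β s)) →
        (∀ x ∈ wedge α β s, HasFDerivAt u (mclm (G x)) x) →
        lpM 2 (wedge α β s) G ≠ ⊤ →
        ENNReal.ofReal ‖(β - α)⁻¹ • ∫ θ in Set.Ioo α β, (u (er θ) - u (s • er θ))‖ ≤
          ENNReal.ofReal (C * Real.sqrt (Real.log (1 / s))) * lpM 2 (wedge α β s) G := by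
  set A := β - α with hA
  have hA0 : 0 < A := sub_pos.mpr hαβ
  refine ⟨(Real.sqrt A)⁻¹, inv_pos.mpr (Real.sqrt_pos.mpr hA0), ?_⟩
  rintro s ⟨hs0, hs1⟩ u G hu hderiv _hfin
  set L := Real.log (1 / s) with hL
  have hL0 : 0 < L := Real.log_pos ((one_lt_div hs0).mpr (by linarith))
  have hd' : ∀ x ∈ wedge α β s, DifferentiableAt ℝ u x :=
    fun x hx => (hderiv x hx).differentiableAt
  have hfd : ∀ x ∈ wedge α β s, fderiv ℝ u x = mclm (G x) :=
    fun x hx => (hderiv x hx).fderiv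
  set Sq : E2 → ℝ :=
    fun x => ∑ i, ∑ j, (fderiv ℝ u x (EuclideanSpace.single j (1:ℝ)) i) ^ 2 with hSq
  have hSqm : Measurable Sq := by
    apply Finset.measurable_sum
    intro i _
    apply Finset.measurable_sum
    intro j _
    exact (((EuclideanSpace.proj i : E2 →L[ℝ] ℝ).continuous.measurable).comp
      (measurable_fderiv_apply_const ℝ u (EuclideanSpace.single j 1))).pow_const 2
  have hSq0 : ∀ x, 0 ≤ Sq x := fun x => by positivity
  have hSqw : ∀ x ∈ wedge α β s, Sq x = frob (G x) ^ (2:ℝ) := by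
    intro x hx
    rw [frob_rpow_two, hSq]
    exact Finset.sum_congr rfl fun i _ => Finset.sum_congr rfl fun j _ => by
      rw [hfd x hx, mclm_single]
  set I := ∫⁻ x in wedge α β s, ENNReal.ofReal (frob (G x) ^ (2:ℝ)) with hI
  have hlpM : lpM 2 (wedge α β s) G = I ^ ((1:ℝ)/2) := rfl
  have hwm : MeasurableSet (wedge α β s) := measurable_wedge hs0 h2π
  have hI2 : I = ∫⁻ x in wedge α β s, ENNReal.ofReal (Sq x) := by
    apply setLIntegral_congr_fun hwm
    exact fun x hx => by rw [hSqw x hx]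
  -- the kernel and the inner integral
  set K : ℝ × ℝ → ℝ≥0∞ :=
    fun q => ENNReal.ofReal (q.2 * ‖fderiv ℝ u (q.2 • er q.1) (er q.1)‖ ^ 2) with hK
  have hKm : Measurable K := by
    have h1 : Measurable fun q : ℝ × ℝ => fderiv ℝ u (q.2 • er q.1) :=
      (measurable_fderiv ℝ u).comp
        ((continuous_snd.smul (continuous_er.comp continuous_fst)).measurable)
    have h2 : Continuous fun p : (E2 →L[ℝ] E2) × E2 => p.1 p.2 :=
      isBoundedBilinearMap_apply.continuous
    have h3 : Measurable fun q : ℝ × ℝ => fderiv ℝ u (q.2 • er q.1) (er q.1) :=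
      h2.measurable.comp (h1.prodMk (continuous_er.comp continuous_fst).measurable)
    exact ENNReal.measurable_ofReal.comp (measurable_snd.mul (h3.norm.pow_const 2))
  set J : ℝ → ℝ≥0∞ := fun θ => ∫⁻ r in Ioo s 1, K (θ, r) with hJ
  have hJm : Measurable J := Measurable.lintegral_prod_right (f := fun θ r => K (θ, r)) hKm
  -- step 3 : ∫ J ≤ I
  have h3 : ∫⁻ θ in Ioo α β, J θ ≤ I := by
    have hmono : ∫⁻ θ in Ioo α β, J θ ≤
        ∫⁻ θ in Ioo α β, ∫⁻ r in Ioo s 1,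
          ENNReal.ofReal r * ENNReal.ofReal (Sq (r • er θ)) := by
      apply setLIntegral_mono' measurableSet_Ioo
      intro θ hθ
      apply setLIntegral_mono' measurableSet_Ioo
      intro r hr
      have hx : r • er θ ∈ wedge α β s := ⟨r, θ, hr, hθ, rfl⟩
      have hr0 : 0 ≤ r := le_of_lt (lt_trans hs0 hr.1)
      have hnd : ‖fderiv ℝ u (r • er θ) (er θ)‖ ≤ frob (G (r • er θ)) := by
        rw [hfd _ hx]
        calc ‖mclm (G (r • er θ)) (er θ)‖ ≤ frob (G (r • er θ)) * ‖er θ‖ :=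
              norm_mclm_apply_le _ _
          _ = frob (G (r • er θ)) := by rw [norm_er, mul_one]
      have hle : r * ‖fderiv ℝ u (r • er θ) (er θ)‖ ^ 2 ≤ r * Sq (r • er θ) := by
        have hfr : frob (G (r • er θ)) ^ (2:ℝ) = frob (G (r • er θ)) ^ (2:ℕ) := by
          rw [← Real.rpow_natCast]; norm_num
        rw [hSqw _ hx, hfr]
        exact mul_le_mul_of_nonneg_left (pow_le_pow_left₀ (norm_nonneg _) hnd 2) hr0
      calc K (θ, r) ≤ ENNReal.ofReal (r * Sq (r • er θ)) := ENNReal.ofReal_le_ofReal hle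
        _ = ENNReal.ofReal r * ENNReal.ofReal (Sq (r • er θ)) :=
            ENNReal.ofReal_mul hr0
    have hton : ∫⁻ p in Ioo s 1 ×ˢ Ioo α β,
        ENNReal.ofReal p.1 * ENNReal.ofReal (Sq (p.1 • er p.2)) =
        ∫⁻ θ in Ioo α β, ∫⁻ r in Ioo s 1,
          ENNReal.ofReal r * ENNReal.ofReal (Sq (r • er θ)) := by
      have hFm : Measurable fun p : ℝ × ℝ =>
          ENNReal.ofReal p.1 * ENNReal.ofReal (Sq (p.1 • er p.2)) := by
        refine Measurable.mul (f := fun p : ℝ × ℝ => ENNReal.ofReal p.1)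
          (g := fun p : ℝ × ℝ => ENNReal.ofReal (Sq (p.1 • er p.2))) ?_ ?_
        · exact ENNReal.measurable_ofReal.comp measurable_fst
        · exact ENNReal.measurable_ofReal.comp (hSqm.comp continuous_smul_er.measurable)
      rw [Measure.volume_eq_prod, ← Measure.prod_restrict]
      exact MeasureTheory.lintegral_prod_symm _ hFm.aemeasurable
    calc ∫⁻ θ in Ioo α β, J θ ≤ _ := hmono
      _ = ∫⁻ p in Ioo s 1 ×ˢ Ioo α β,
          ENNReal.ofReal p.1 * ENNReal.ofReal (Sq (p.1 • er p.2)) := hton.symm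
      _ = ∫⁻ x in wedge α β s, ENNReal.ofReal (Sq x) := by
          rw [wedge_lintegral hs0 h2π (fun x => ENNReal.ofReal (Sq x))]
      _ = I := hI2.symm
  -- boundary function
  set g : ℝ → E2 := fun θ => u (er θ) - u (s • er θ) with hg
  have hmc1 : ∀ θ ∈ Icc α β, er θ ∈ closure (wedge α β s) := by
    intro θ hθ
    have h := mem_closure_wedge (s := s) hs1 hαβ (r := 1) ⟨hs1.le, le_refl 1⟩ hθ
    rwa [one_smul] at h
  have hmcs : ∀ θ ∈ Icc α β, s • er θ ∈ closure (wedge α β s) :=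
    fun θ hθ => mem_closure_wedge hs1 hαβ ⟨le_refl s, hs1.le⟩ hθ
  have hgc : ContinuousOn g (Icc α β) := by
    apply ContinuousOn.sub
    · exact hu.comp continuous_er.continuousOn hmc1
    · exact hu.comp (continuous_er.const_smul s).continuousOn hmcs
  have hgint : IntegrableOn g (Ioo α β) :=
    (hgc.integrableOn_Icc).mono_set Ioo_subset_Icc_self
  have hkey : ∀ θ ∈ Ioo α β, ENNReal.ofReal ‖g θ‖ ≤
      (ENNReal.ofReal L) ^ ((1:ℝ)/2) * J θ ^ ((1:ℝ)/2) :=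
    fun θ hθ => key_theta hαβ hs0 hs1 hu hd' hθ
  have hchain : ∫⁻ θ in Ioo α β, ENNReal.ofReal ‖g θ‖ ≤
      (ENNReal.ofReal L) ^ ((1:ℝ)/2) * ((ENNReal.ofReal A) ^ ((1:ℝ)/2) * I ^ ((1:ℝ)/2)) := by
    calc ∫⁻ θ in Ioo α β, ENNReal.ofReal ‖g θ‖
        ≤ ∫⁻ θ in Ioo α β, (ENNReal.ofReal L) ^ ((1:ℝ)/2) * J θ ^ ((1:ℝ)/2) :=
          setLIntegral_mono' measurableSet_Ioo hkey
      _ = (ENNReal.ofReal L) ^ ((1:ℝ)/2) * ∫⁻ θ in Ioo α β, J θ ^ ((1:ℝ)/2) :=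
          lintegral_const_mul _ (hJm.pow_const _)
      _ ≤ (ENNReal.ofReal L) ^ ((1:ℝ)/2) *
          ((volume (Ioo α β)) ^ ((1:ℝ)/2) * (∫⁻ θ in Ioo α β, J θ) ^ ((1:ℝ)/2)) :=
          mul_le_mul_right (sqrt_holder hJm) _
      _ ≤ _ := by
          rw [Real.volume_Ioo]
          exact mul_le_mul_right
            (mul_le_mul_right (ENNReal.rpow_le_rpow h3 (by norm_num)) _) _
  have e1 : (ENNReal.ofReal L) ^ ((1:ℝ)/2) = ENNReal.ofReal (Real.sqrt L) := by
    rw [ENNReal.ofReal_rpow_of_nonneg hL0.le (by norm_num), ← Real.sqrt_eq_rpow]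
  have e2 : (ENNReal.ofReal A) ^ ((1:ℝ)/2) = ENNReal.ofReal (Real.sqrt A) := by
    rw [ENNReal.ofReal_rpow_of_nonneg hA0.le (by norm_num), ← Real.sqrt_eq_rpow]
  have hsA : Real.sqrt A ≠ 0 := (Real.sqrt_pos.mpr hA0).ne'
  have hmm : Real.sqrt A * Real.sqrt A = A := Real.mul_self_sqrt hA0.le
  have h4 : A⁻¹ * Real.sqrt A = (Real.sqrt A)⁻¹ := by
    calc A⁻¹ * Real.sqrt A = (Real.sqrt A * Real.sqrt A)⁻¹ * Real.sqrt A := by rw [hmm]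
      _ = (Real.sqrt A)⁻¹ := by rw [mul_inv, mul_assoc, inv_mul_cancel₀ hsA, mul_one]
  have e3 : A⁻¹ * Real.sqrt L * Real.sqrt A = (Real.sqrt A)⁻¹ * Real.sqrt L := by
    calc A⁻¹ * Real.sqrt L * Real.sqrt A = (A⁻¹ * Real.sqrt A) * Real.sqrt L := by ring
      _ = (Real.sqrt A)⁻¹ * Real.sqrt L := by rw [h4]
  rw [hlpM]
  calc ENNReal.ofReal ‖A⁻¹ • ∫ θ in Ioo α β, g θ‖
      = ENNReal.ofReal A⁻¹ * ENNReal.ofReal ‖∫ θ in Ioo α β, g θ‖ := by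
        rw [norm_smul, Real.norm_eq_abs, abs_of_pos (inv_pos.mpr hA0),
          ENNReal.ofReal_mul (inv_pos.mpr hA0).le]
    _ ≤ ENNReal.ofReal A⁻¹ * ∫⁻ θ in Ioo α β, ENNReal.ofReal ‖g θ‖ := by
        apply mul_le_mul_right
        calc ENNReal.ofReal ‖∫ θ in Ioo α β, g θ‖
            ≤ ENNReal.ofReal (∫ θ in Ioo α β, ‖g θ‖) :=
              ENNReal.ofReal_le_ofReal (norm_integral_le_integral_norm _)
          _ = ∫⁻ θ in Ioo α β, ENNReal.ofReal ‖g θ‖ :=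
              ofReal_integral_eq_lintegral_ofReal hgint.norm
                (Filter.Eventually.of_forall fun θ => norm_nonneg _)
    _ ≤ ENNReal.ofReal A⁻¹ *
        ((ENNReal.ofReal L) ^ ((1:ℝ)/2) * ((ENNReal.ofReal A) ^ ((1:ℝ)/2) * I ^ ((1:ℝ)/2))) :=
        mul_le_mul_right hchain _
    _ = ENNReal.ofReal ((Real.sqrt A)⁻¹ * Real.sqrt L) * I ^ ((1:ℝ)/2) := by
        rw [e1, e2, ← mul_assoc, ← mul_assoc,
          ← ENNReal.ofReal_mul (inv_pos.mpr hA0).le,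
          ← ENNReal.ofReal_mul
            (mul_nonneg (inv_pos.mpr hA0).le (Real.sqrt_nonneg _)), e3]
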